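/- Let f : T² → ℝ be smooth with 0 a regular value and suppose there exists a non-contractible loop γ₀ : S¹ → f⁻¹(0). Then both the set {f > 0} and the set {f < 0} contain non-contractible loops, and the images of the induced maps on H₁(T²) ≅ ℤ² from {f > 0} and {f < 0} are nonzero subgroups lying in a common rank-one subgroup (they are orthogonal for the intersection form, hence ℝ-colinear). -/

import Mathlib

open Set Real


private lemma telescope_prod (h : ℕ → ℂ) (hne : ∀ k, h k ≠ 0) (n : ℕ) :
    ∏ k ∈ Finset.range n, (h (k+1) / h k) = h n / h 0 := by
  induction n with
  | zero => simp [div_self (hne 0)]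
  | succ n ih =>
    rw [Finset.prod_range_succ, ih,
      div_mul_div_comm, div_eq_div_iff (mul_ne_zero (hne 0) (hne n)) (hne 0)]
    ring

private lemma abs_min_le (s a b : ℝ) : |min s a - min s b| ≤ |a - b| := by
  have := abs_min_sub_min_le_max s a s b
  simpa using this

private lemma stay {φ : ℝ → ℝ} (hφ : ContinuousOn φ (Set.Icc 0 1)) {P : ℝ → Prop}
    (hP : ∀ x ∈ Set.Icc (0:ℝ) 1, P (φ x)) {c c' : ℝ} (hc : ¬ P c) (hc' : ¬ P c')
    (h0 : φ 0 ∈ Set.Ioo c c') : ∀ x ∈ Set.Icc (0:ℝ) 1, φ x ∈ Set.Ioo c c' := by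
  intro x hx
  have sub : Set.Icc (0:ℝ) x ⊆ Set.Icc (0:ℝ) 1 := Icc_subset_Icc le_rfl hx.2
  constructor
  · by_contra h
    push_neg at h
    obtain ⟨y, hy, hyc⟩ := intermediate_value_Icc' hx.1 (hφ.mono sub) ⟨h, h0.1.le⟩
    exact hc (hyc ▸ hP y (sub hy))
  · by_contra h
    push_neg at h
    obtain ⟨y, hy, hyc⟩ := intermediate_value_Icc hx.1 (hφ.mono sub) ⟨h0.2.le, h⟩
    exact hc' (hyc ▸ hP y (sub hy))

private lemma translate_int {γ : ℝ → ℝ × ℝ} {a : ℝ × ℝ} (hp : ∀ s, γ (s+1) = γ s + a) :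
    ∀ (n : ℤ) (s : ℝ), γ (s + n) = γ s + (n : ℝ) • a := by
  intro n
  induction n using Int.induction_on with
  | zero => simp
  | succ k ih =>
    intro s
    have h1 : (s + ((k:ℝ)+1)) = (s + k) + 1 := by ring
    have ih' := ih s
    push_cast at ih' ⊢
    rw [h1, hp (s + k), ih', add_smul, one_smul, add_assoc]
  | pred k ih =>
    intro s
    have h1 : s + (-(k:ℝ) - 1) + 1 = s + -(k:ℝ) := by ring
    have h2 := hp (s + (-(k:ℝ) - 1))
    have ih' := ih s
    push_cast at ih' ⊢
    rw [h1, ih'] at h2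
    have h3 : γ (s + (-(k:ℝ) - 1)) = γ s + (-(k:ℝ)) • a - a :=
      eq_sub_of_add_eq h2.symm
    rw [h3, sub_smul, one_smul]
    abel

private lemma periodic_bounded {ψ : ℝ → ℝ} (hc : Continuous ψ) (hp : ∀ s, ψ (s+1) = ψ s) :
    ∃ C, 0 ≤ C ∧ ∀ s, |ψ s| ≤ C := by
  have hint : ∀ (n : ℤ) (s : ℝ), ψ (s + n) = ψ s := by
    intro n
    induction n using Int.induction_on with
    | zero => simp
    | succ k ih =>
      intro s
      have h1 : (s + ((k:ℝ)+1)) = (s + k) + 1 := by ring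
      have ih' := ih s
      push_cast at ih' ⊢
      rw [h1, hp (s + k), ih']
    | pred k ih =>
      intro s
      have h1 : s + (-(k:ℝ) - 1) + 1 = s + -(k:ℝ) := by ring
      have h2 := hp (s + (-(k:ℝ) - 1))
      have ih' := ih s
      push_cast at ih' ⊢
      rw [h1, ih'] at h2
      rw [h2]
  obtain ⟨C, hC⟩ := (isCompact_Icc (a := (0:ℝ)) (b := 1)).exists_bound_of_continuousOn
    hc.continuousOn
  refine ⟨max C 0, le_max_right _ _, fun s => ?_⟩
  have h1 : ψ s = ψ (Int.fract s) := by
    conv_lhs => rw [← Int.fract_add_floor s]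
    exact hint ⌊s⌋ (Int.fract s)
  rw [h1]
  have := hC (Int.fract s) ⟨Int.fract_nonneg s, (Int.fract_lt_one s).le⟩
  rw [Real.norm_eq_abs] at this
  exact this.trans (le_max_left _ _)

private def clamp01 (x : ℝ) : ℝ := max (min x 1) 0

private lemma clamp01_mem (x : ℝ) : clamp01 x ∈ Icc (0:ℝ) 1 :=
  ⟨le_max_right _ _, max_le (min_le_right _ _) zero_le_one⟩

private lemma clamp01_eq_self {x : ℝ} (hx : x ∈ Icc (0:ℝ) 1) : clamp01 x = x := by
  unfold clamp01
  rw [min_eq_left hx.2, max_eq_left hx.1]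

private lemma clamp01_zero : clamp01 0 = 0 := by
  simp [clamp01]

private lemma clamp01_continuous : Continuous clamp01 :=
  (continuous_id.min continuous_const).max continuous_const

/-- Lifting of a nonvanishing "clamped" map on the square through `Complex.exp`. -/
private lemma lift_sq (u : ℝ → ℝ → ℂ)
    (hc : Continuous fun p : ℝ × ℝ => u p.1 p.2)
    (hcl : ∀ s t, u s t = u (clamp01 s) (clamp01 t))
    (hne : ∀ s t, u s t ≠ 0) :
    ∃ L : ℝ → ℝ → ℂ, (Continuous fun p : ℝ × ℝ => L p.1 p.2) ∧
      ∀ s t, Complex.exp (L s t) = u s t := by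
  classical
  have hclmem : ∀ x : ℝ, clamp01 x ∈ Icc (0:ℝ) 1 := clamp01_mem
  -- the lower bound ε on ‖u‖
  set K : Set (ℝ × ℝ) := Icc (0:ℝ) 1 ×ˢ Icc (0:ℝ) 1 with hKdef
  have hK : IsCompact K := isCompact_Icc.prod isCompact_Icc
  obtain ⟨p₀, hp₀K, hp₀min⟩ := hK.exists_isMinOn
    ⟨((0:ℝ),(0:ℝ)), mem_prod.mpr ⟨⟨le_rfl, zero_le_one⟩, ⟨le_rfl, zero_le_one⟩⟩⟩
    (continuous_norm.comp hc).continuousOn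
  set ε : ℝ := ‖u p₀.1 p₀.2‖ with hεdef
  have hε : 0 < ε := norm_pos_iff.mpr (hne _ _)
  have hlow : ∀ s t, ε ≤ ‖u s t‖ := by
    intro s t
    rw [hcl s t]
    exact isMinOn_iff.mp hp₀min ((clamp01 s), (clamp01 t))
      (mem_prod.mpr ⟨hclmem s, hclmem t⟩)
  -- uniform continuity and choice of n
  have huc := hK.uniformContinuousOn_of_continuous hc.continuousOn
  rw [Metric.uniformContinuousOn_iff_le] at huc
  obtain ⟨δ, hδpos, hδ⟩ := huc (ε/2) (by positivity)
  obtain ⟨n₀, hn₀⟩ := exists_nat_one_div_lt hδpos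
  set n : ℕ := n₀ + 1 with hndef
  have hnpos : (0:ℝ) < n := by positivity
  have h1n : 1/(n:ℝ) ≤ δ := by
    apply le_of_lt
    convert hn₀ using 3
    push_cast [hndef]
    ring
  -- oscillation bound
  have key : ∀ a b c d : ℝ, a ∈ Icc (0:ℝ) 1 → b ∈ Icc (0:ℝ) 1 → c ∈ Icc (0:ℝ) 1 →
      d ∈ Icc (0:ℝ) 1 → dist ((a,b) : ℝ × ℝ) (c,d) ≤ 1/n → ‖u a b - u c d‖ ≤ ε/2 := by
    intro a b c d ha hb hc' hd hdist
    have := hδ (a,b) (mem_prod.mpr ⟨ha, hb⟩) (c,d) (mem_prod.mpr ⟨hc', hd⟩)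
      (hdist.trans h1n)
    rwa [dist_eq_norm] at this
  -- ratio facts
  have ratio : ∀ a b c d : ℝ, a ∈ Icc (0:ℝ) 1 → b ∈ Icc (0:ℝ) 1 → c ∈ Icc (0:ℝ) 1 →
      d ∈ Icc (0:ℝ) 1 → dist ((a,b) : ℝ × ℝ) (c,d) ≤ 1/n →
      u a b / u c d ∈ Complex.slitPlane := by
    intro a b c d ha hb hc' hd hdist
    have h1 : ‖u a b / u c d - 1‖ ≤ 1/2 := by
      have hcd := hne c d
      have : u a b / u c d - 1 = (u a b - u c d) / u c d := by field_simp
      rw [this, norm_div]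
      rw [div_le_iff₀ (norm_pos_iff.mpr hcd)]
      calc ‖u a b - u c d‖ ≤ ε/2 := key a b c d ha hb hc' hd hdist
        _ ≤ 1/2 * ‖u c d‖ := by
            have := hlow c d
            nlinarith
    have h2 : |(u a b / u c d - 1).re| ≤ 1/2 := by
      calc |(u a b / u c d - 1).re| ≤ ‖u a b / u c d - 1‖ := Complex.abs_re_le_norm _
        _ ≤ 1/2 := h1
    have h3 : (0:ℝ) < (u a b / u c d).re := by
      have : (u a b / u c d).re = 1 + (u a b / u c d - 1).re := by simp
      rw [this]
      have := abs_le.mp h2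
      linarith [this.1]
    exact Or.inl h3
  -- the subdivision points
  set q : ℕ → ℝ → ℝ := fun k x => max (min x ((k:ℝ)/n)) 0 with hqdef
  have hqmem : ∀ k x, k ≤ n → q k x ∈ Icc (0:ℝ) 1 := by
    intro k x hk
    refine ⟨le_max_right _ _, max_le ((min_le_right _ _).trans ?_) zero_le_one⟩
    rw [div_le_one hnpos]
    exact_mod_cast hk
  have hq0 : ∀ x, q 0 x = 0 := by
    intro x
    simp only [hqdef, Nat.cast_zero, zero_div]
    exact max_eq_right (min_le_right x 0)
  have hqn : ∀ x, q n x = clamp01 x := by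
    intro x
    simp only [hqdef, div_self hnpos.ne']
    rfl
  have hqdiff : ∀ k x, |q (k+1) x - q k x| ≤ 1/n := by
    intro k x
    calc |q (k+1) x - q k x| ≤ |min x (((k:ℕ)+1:ℝ)/n) - min x ((k:ℝ)/n)| := by
          have := abs_max_sub_max_le_abs (min x (((k:ℕ)+1:ℝ)/n)) (min x ((k:ℝ)/n)) 0
          simpa [hqdef] using this
      _ ≤ |(((k:ℕ)+1:ℝ)/n) - ((k:ℝ)/n)| := abs_min_le _ _ _
      _ = 1/n := by
          rw [div_sub_div_same]
          push_cast
          rw [add_sub_cancel_left]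
          rw [abs_of_pos (by positivity)]
  -- row and column distances
  have hrowdist : ∀ k x, dist ((q (k+1) x, (0:ℝ)) : ℝ × ℝ) (q k x, 0) ≤ 1/n := by
    intro k x
    rw [Prod.dist_eq]
    simp only [dist_self, Real.dist_eq]
    exact max_le (hqdiff k x) (by positivity)
  have hcoldist : ∀ k x y, dist ((y, q (k+1) x) : ℝ × ℝ) (y, q k x) ≤ 1/n := by
    intro k x y
    rw [Prod.dist_eq]
    simp only [dist_self, Real.dist_eq]
    exact max_le (by positivity) (hqdiff k x)
  have h0mem : (0:ℝ) ∈ Icc (0:ℝ) 1 := ⟨le_rfl, zero_le_one⟩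
  -- rewrite lemma : u s x = u (clamp01 s) x for x ∈ Icc 0 1
  have hrew : ∀ s x, x ∈ Icc (0:ℝ) 1 → u s x = u (clamp01 s) x := by
    intro s x hx
    rw [hcl s x, clamp01_eq_self hx, hcl (clamp01 s) x, clamp01_eq_self hx,
      clamp01_eq_self (hclmem s)]
  -- the lift
  set L : ℝ → ℝ → ℂ := fun s t =>
    Complex.log (u 0 0)
    + ∑ k ∈ Finset.range n, Complex.log (u (q (k+1) s) 0 / u (q k s) 0)
    + ∑ k ∈ Finset.range n, Complex.log (u s (q (k+1) t) / u s (q k t)) with hLdef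
  have hrowslit : ∀ k s, k < n → u (q (k+1) s) 0 / u (q k s) 0 ∈ Complex.slitPlane := by
    intro k s hk
    exact ratio _ _ _ _ (hqmem (k+1) s hk) h0mem (hqmem k s (le_of_lt hk)) h0mem
      (hrowdist k s)
  have hcolslit : ∀ k s t, k < n → u s (q (k+1) t) / u s (q k t) ∈ Complex.slitPlane := by
    intro k s t hk
    rw [hrew s _ (hqmem (k+1) t hk), hrew s _ (hqmem k t (le_of_lt hk))]
    exact ratio _ _ _ _ (hclmem s) (hqmem (k+1) t hk) (hclmem s) (hqmem k t (le_of_lt hk))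
      (hcoldist k t (clamp01 s))
  refine ⟨L, ?_, ?_⟩
  · -- continuity
    have hqcont : ∀ k, Continuous (q k) := by
      intro k
      exact (continuous_id.min continuous_const).max continuous_const
    apply Continuous.add
    apply Continuous.add
    · exact continuous_const
    · apply continuous_finset_sum
      intro k hk
      rw [continuous_iff_continuousAt]
      intro p
      refine ContinuousAt.clog ?_ (hrowslit k p.1 (Finset.mem_range.mp hk))
      apply ContinuousAt.div
      · exact (hc.comp (((hqcont (k+1)).comp continuous_fst).prodMk
          continuous_const)).continuousAt
      · exact (hc.comp (((hqcont k).comp continuous_fst).prodMk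
          continuous_const)).continuousAt
      · exact hne _ _
    · apply continuous_finset_sum
      intro k hk
      rw [continuous_iff_continuousAt]
      intro p
      refine ContinuousAt.clog ?_ (hcolslit k p.1 p.2 (Finset.mem_range.mp hk))
      apply ContinuousAt.div
      · exact (hc.comp (continuous_fst.prodMk
          ((hqcont (k+1)).comp continuous_snd))).continuousAt
      · exact (hc.comp (continuous_fst.prodMk
          ((hqcont k).comp continuous_snd))).continuousAt
      · exact hne _ _
  · -- the exponential property
    intro s t
    have hexp1 : Complex.exp (∑ k ∈ Finset.range n,
        Complex.log (u (q (k+1) s) 0 / u (q k s) 0)) = u (clamp01 s) 0 / u 0 0 := by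
      rw [Complex.exp_sum]
      have : ∀ k ∈ Finset.range n,
          Complex.exp (Complex.log (u (q (k+1) s) 0 / u (q k s) 0))
          = u (q (k+1) s) 0 / u (q k s) 0 := by
        intro k hk
        exact Complex.exp_log (div_ne_zero (hne _ _) (hne _ _))
      rw [Finset.prod_congr rfl this,
        telescope_prod (fun k => u (q k s) 0) (fun k => hne _ _) n, hqn, hq0]
    have hexp2 : Complex.exp (∑ k ∈ Finset.range n,
        Complex.log (u s (q (k+1) t) / u s (q k t))) = u s (clamp01 t) / u s 0 := by
      rw [Complex.exp_sum]
      have : ∀ k ∈ Finset.range n,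
          Complex.exp (Complex.log (u s (q (k+1) t) / u s (q k t)))
          = u s (q (k+1) t) / u s (q k t) := by
        intro k hk
        exact Complex.exp_log (div_ne_zero (hne _ _) (hne _ _))
      rw [Finset.prod_congr rfl this,
        telescope_prod (fun k => u s (q k t)) (fun k => hne _ _) n, hqn, hq0]
    have hs0 : u s 0 = u (clamp01 s) 0 := by
      rw [hcl s 0, clamp01_zero]
    have hst : u s (clamp01 t) = u s t := by
      rw [hcl s (clamp01 t), clamp01_eq_self (hclmem t), ← hcl s t]
    rw [hLdef]
    simp only []
    rw [Complex.exp_add, Complex.exp_add, Complex.exp_log (hne 0 0), hexp1, hexp2,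
      hst, hs0]
    have hA := hne 0 0
    have hB := hne (clamp01 s) 0
    field_simp
    try ring

private lemma clamp01_one : clamp01 1 = 1 := clamp01_eq_self ⟨zero_le_one, le_rfl⟩

/-- The crossing lemma: a continuous path crossing left-to-right must meet a
continuous path crossing bottom-to-top. -/
private lemma crossing (f g : ℝ → ℝ × ℝ) (hf : Continuous f) (hg : Continuous g)
    (h1 : ∀ t ∈ Icc (0:ℝ) 1, (f 0).1 ≤ (g t).1)
    (h2 : ∀ t ∈ Icc (0:ℝ) 1, (g t).1 ≤ (f 1).1)
    (h3 : ∀ s ∈ Icc (0:ℝ) 1, (g 0).2 ≤ (f s).2)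
    (h4 : ∀ s ∈ Icc (0:ℝ) 1, (f s).2 ≤ (g 1).2) :
    ∃ s ∈ Icc (0:ℝ) 1, ∃ t ∈ Icc (0:ℝ) 1, f s = g t := by
  by_contra hcon
  push_neg at hcon
  set u : ℝ → ℝ → ℂ := fun s t =>
    (((f (clamp01 s)).1 - (g (clamp01 t)).1 : ℝ) : ℂ)
    + (((f (clamp01 s)).2 - (g (clamp01 t)).2 : ℝ) : ℂ) * Complex.I with hudef
  have hure : ∀ s t, (u s t).re = (f (clamp01 s)).1 - (g (clamp01 t)).1 := by
    intro s t; simp [hudef]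
  have huim : ∀ s t, (u s t).im = (f (clamp01 s)).2 - (g (clamp01 t)).2 := by
    intro s t; simp [hudef]
  have hc : Continuous fun p : ℝ × ℝ => u p.1 p.2 := by
    apply Continuous.add
    · apply Complex.continuous_ofReal.comp
      exact ((continuous_fst.comp (hf.comp (clamp01_continuous.comp continuous_fst)))).sub
        ((continuous_fst.comp (hg.comp (clamp01_continuous.comp continuous_snd))))
    · apply Continuous.mul _ continuous_const
      apply Complex.continuous_ofReal.comp
      exact ((continuous_snd.comp (hf.comp (clamp01_continuous.comp continuous_fst)))).sub
        ((continuous_snd.comp (hg.comp (clamp01_continuous.comp continuous_snd))))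
  have hclam : ∀ s t, u s t = u (clamp01 s) (clamp01 t) := by
    intro s t
    simp only [hudef, clamp01_eq_self (clamp01_mem s), clamp01_eq_self (clamp01_mem t)]
  have hne : ∀ s t, u s t ≠ 0 := by
    intro s t h
    have hre := congrArg Complex.re h
    have him := congrArg Complex.im h
    rw [hure] at hre
    rw [huim] at him
    simp only [Complex.zero_re, Complex.zero_im] at hre him
    exact hcon (clamp01 s) (clamp01_mem s) (clamp01 t) (clamp01_mem t)
      (Prod.ext (by linarith) (by linarith))
  obtain ⟨L, hLc, hLe⟩ := lift_sq u hc hclam hne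
  obtain ⟨k, hkdef⟩ : ∃ k : ℤ, k = ⌊(L 0 0).im / (2 * π)⌋ := ⟨_, rfl⟩
  obtain ⟨θ, hθdef⟩ : ∃ θ : ℝ → ℝ → ℝ, θ = fun s t => (L s t).im - 2 * π * k :=
    ⟨_, rfl⟩
  have hLe' : ∀ s t, Complex.exp (L s t - (k:ℂ) * (2 * (π:ℂ) * Complex.I)) = u s t := by
    intro s t
    rw [Complex.exp_sub, Complex.exp_int_mul_two_pi_mul_I, div_one, hLe]
  have hsubre : ∀ s t, (L s t - (k:ℂ) * (2 * (π:ℂ) * Complex.I)).re = (L s t).re := by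
    intro s t; simp
  have hsubim : ∀ s t, (L s t - (k:ℂ) * (2 * (π:ℂ) * Complex.I)).im = θ s t := by
    intro s t; simp [hθdef]; ring
  have hre : ∀ s t, (u s t).re = Real.exp ((L s t).re) * Real.cos (θ s t) := by
    intro s t
    rw [← hLe' s t, Complex.exp_re, hsubre, hsubim]
  have him : ∀ s t, (u s t).im = Real.exp ((L s t).re) * Real.sin (θ s t) := by
    intro s t
    rw [← hLe' s t, Complex.exp_im, hsubre, hsubim]
  have hexppos : ∀ s t, 0 < Real.exp ((L s t).re) := fun s t => Real.exp_pos _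
  -- sign transfer
  have cos_le : ∀ s t, (u s t).re ≤ 0 → Real.cos (θ s t) ≤ 0 := by
    intro s t h; have h1 := hre s t; have h2 := hexppos s t; nlinarith
  have cos_ge : ∀ s t, 0 ≤ (u s t).re → 0 ≤ Real.cos (θ s t) := by
    intro s t h; have h1 := hre s t; have h2 := hexppos s t; nlinarith
  have sin_le : ∀ s t, (u s t).im ≤ 0 → Real.sin (θ s t) ≤ 0 := by
    intro s t h; have h1 := him s t; have h2 := hexppos s t; nlinarith
  have sin_ge : ∀ s t, 0 ≤ (u s t).im → 0 ≤ Real.sin (θ s t) := by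
    intro s t h; have h1 := him s t; have h2 := hexppos s t; nlinarith
  have hπ := Real.pi_pos
  have h0I : (0:ℝ) ∈ Icc (0:ℝ) 1 := ⟨le_rfl, zero_le_one⟩
  have h1I : (1:ℝ) ∈ Icc (0:ℝ) 1 := ⟨zero_le_one, le_rfl⟩
  have h2pi : (0:ℝ) < 2*π := by positivity
  have hθ00a : 0 ≤ θ 0 0 := by
    have h := Int.floor_le ((L 0 0).im / (2 * π))
    rw [← hkdef] at h
    rw [le_div_iff₀ h2pi] at h
    simp only [hθdef]
    nlinarith [h]
  have hθ00b : θ 0 0 < 2 * π := by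
    have h := Int.lt_floor_add_one ((L 0 0).im / (2 * π))
    rw [← hkdef] at h
    rw [div_lt_iff₀ h2pi] at h
    simp only [hθdef]
    nlinarith [h]
  have hsin32 : Real.sin (π + π/2) = -1 := by
    rw [Real.sin_add]; simp
  have e1 : ¬ ((0:ℝ) ≤ Real.sin (-(π/2))) := by
    norm_num [Real.sin_neg, Real.sin_pi_div_two]
  have e2 : ¬ ((0:ℝ) ≤ Real.sin (π + π/2)) := by norm_num [hsin32]
  have e3 : ¬ ((0:ℝ) ≤ Real.cos (-π)) := by norm_num [Real.cos_neg, Real.cos_pi]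
  have e4 : ¬ ((0:ℝ) ≤ Real.cos π) := by norm_num [Real.cos_pi]
  have e5 : ¬ (Real.sin (-(π + π/2)) ≤ 0) := by
    have e5v : Real.sin (-(π + π/2)) = 1 := by rw [Real.sin_neg, hsin32]; norm_num
    rw [e5v]; norm_num
  have e6 : ¬ (Real.sin (π/2) ≤ 0) := by norm_num [Real.sin_pi_div_two]
  have e7 : ¬ (Real.cos (-(2*π)) ≤ 0) := by norm_num [Real.cos_neg, Real.cos_two_pi]
  have e8 : ¬ (Real.cos (0:ℝ) ≤ 0) := by norm_num [Real.cos_zero]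
  have hcos00 : Real.cos (θ 0 0) ≤ 0 := by
    apply cos_le
    rw [hure, clamp01_zero]
    have := h1 0 h0I
    linarith
  have hsin00 : 0 ≤ Real.sin (θ 0 0) := by
    apply sin_ge
    rw [huim, clamp01_zero]
    have := h3 0 h0I
    linarith
  have hθ00 : θ 0 0 ∈ Icc (π/2) π := by
    constructor
    · by_contra h
      push_neg at h
      have : 0 < Real.cos (θ 0 0) :=
        Real.cos_pos_of_mem_Ioo (x := θ 0 0) ⟨by linarith, h⟩
      linarith
    · by_contra h
      push_neg at h
      have h5 : Real.sin (θ 0 0 - 2*π) < 0 :=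
        Real.sin_neg_of_neg_of_neg_pi_lt (by linarith) (by linarith)
      rw [Real.sin_sub_two_pi] at h5
      linarith
  have hθcont : Continuous fun p : ℝ × ℝ => θ p.1 p.2 := by
    simp only [hθdef]
    exact (Complex.continuous_im.comp hLc).sub continuous_const
  -- claim 1 : bottom edge
  have claim1 : θ 1 0 ∈ Icc (0:ℝ) (π/2) := by
    have hst0 := stay (φ := fun x => θ x 0) (P := fun y => 0 ≤ Real.sin y)
      (((hθcont.comp (continuous_id.prodMk continuous_const))).continuousOn)
      (fun x _ => by
        apply sin_ge
        rw [huim, clamp01_zero]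
        have := h3 (clamp01 x) (clamp01_mem x)
        linarith)
      (c := -(π/2)) (c' := π + π/2) e1 e2
      (show θ 0 0 ∈ Set.Ioo (-(π/2)) (π + π/2) from
        ⟨by linarith [hθ00.1], by linarith [hθ00.2]⟩)
      1 h1I
    have hst : θ 1 0 ∈ Set.Ioo (-(π/2)) (π + π/2) := hst0
    have hcos10 : 0 ≤ Real.cos (θ 1 0) := by
      apply cos_ge
      rw [hure, clamp01_zero, clamp01_one]
      have := h2 0 h0I
      linarith
    have hsin10 : 0 ≤ Real.sin (θ 1 0) := by
      apply sin_ge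
      rw [huim, clamp01_zero, clamp01_one]
      have := h3 1 h1I
      linarith
    constructor
    · by_contra h
      push_neg at h
      have : Real.sin (θ 1 0) < 0 :=
        Real.sin_neg_of_neg_of_neg_pi_lt h (by linarith [hst.1])
      linarith
    · by_contra h
      push_neg at h
      have : Real.cos (θ 1 0) < 0 :=
        Real.cos_neg_of_pi_div_two_lt_of_lt h (by linarith [hst.2])
      linarith
  -- claim 2 : right edge
  have claim2 : θ 1 1 ∈ Icc (-(π/2)) 0 := by
    have hst0 := stay (φ := fun x => θ 1 x) (P := fun y => 0 ≤ Real.cos y)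
      (((hθcont.comp (continuous_const.prodMk continuous_id))).continuousOn)
      (fun x _ => by
        apply cos_ge
        rw [hure, clamp01_one]
        have := h2 (clamp01 x) (clamp01_mem x)
        linarith)
      (c := -π) (c' := π) e3 e4
      (show θ 1 0 ∈ Set.Ioo (-π) π from
        ⟨by linarith [claim1.1], by linarith [claim1.2]⟩)
      1 h1I
    have hst : θ 1 1 ∈ Set.Ioo (-π) π := hst0
    have hcos11 : 0 ≤ Real.cos (θ 1 1) := by
      apply cos_ge
      rw [hure, clamp01_one]
      have := h2 1 h1I
      linarith
    have hsin11 : Real.sin (θ 1 1) ≤ 0 := by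
      apply sin_le
      rw [huim, clamp01_one]
      have := h4 1 h1I
      linarith
    constructor
    · by_contra h
      push_neg at h
      have : Real.cos (θ 1 1) < 0 := by
        rw [← Real.cos_neg]
        exact Real.cos_neg_of_pi_div_two_lt_of_lt (by linarith) (by linarith [hst.1])
      linarith
    · by_contra h
      push_neg at h
      have : 0 < Real.sin (θ 1 1) :=
        Real.sin_pos_of_pos_of_lt_pi h (by linarith [hst.2])
      linarith
  -- claim 3 : top edge
  have claim3 : θ 0 1 ∈ Icc (-π) (-(π/2)) := by
    have hst0 := stay (φ := fun x => θ (1-x) 1) (P := fun y => Real.sin y ≤ 0)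
      ((hθcont.comp ((continuous_const.sub continuous_id).prodMk
        continuous_const)).continuousOn)
      (fun x _ => by
        apply sin_le
        rw [huim, clamp01_one]
        have := h4 (clamp01 (1-x)) (clamp01_mem (1-x))
        linarith)
      (c := -(π + π/2)) (c' := π/2) e5 e6
      (by
        show θ (1-0) 1 ∈ Set.Ioo (-(π + π/2)) (π/2)
        rw [sub_zero]
        exact ⟨by linarith [claim2.1], by linarith [claim2.2]⟩)
      1 h1I
    have hst : θ (1-1) 1 ∈ Set.Ioo (-(π + π/2)) (π/2) := hst0
    rw [sub_self] at hst
    have hcos01 : Real.cos (θ 0 1) ≤ 0 := by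
      apply cos_le
      rw [hure, clamp01_zero, clamp01_one]
      have := h1 1 h1I
      linarith
    have hsin01 : Real.sin (θ 0 1) ≤ 0 := by
      apply sin_le
      rw [huim, clamp01_zero, clamp01_one]
      have := h4 0 h0I
      linarith
    constructor
    · by_contra h
      push_neg at h
      have h5 : 0 < Real.sin (θ 0 1 + 2*π) :=
        Real.sin_pos_of_pos_of_lt_pi (by linarith [hst.1]) (by linarith)
      rw [Real.sin_add_two_pi] at h5
      linarith
    · by_contra h
      push_neg at h
      have : 0 < Real.cos (θ 0 1) :=
        Real.cos_pos_of_mem_Ioo (x := θ 0 1) ⟨by linarith, by linarith [hst.2]⟩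
      linarith
  -- claim 4 : left edge, contradiction
  have hst0 := stay (φ := fun x => θ 0 (1-x)) (P := fun y => Real.cos y ≤ 0)
    ((hθcont.comp (continuous_const.prodMk
      (continuous_const.sub continuous_id))).continuousOn)
    (fun x _ => by
      apply cos_le
      rw [hure, clamp01_zero]
      have := h1 (clamp01 (1-x)) (clamp01_mem (1-x))
      linarith)
    (c := -(2*π)) (c' := 0) e7 e8
    (by
      show θ 0 (1-0) ∈ Set.Ioo (-(2*π)) 0
      rw [sub_zero]
      exact ⟨by linarith [claim3.1], by linarith [claim3.2]⟩)
    1 h1I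
  have hst : θ 0 (1-1) ∈ Set.Ioo (-(2*π)) 0 := hst0
  rw [sub_self] at hst
  linarith [hθ00.1, hst.2]

/-- Two "loops on the torus" (periodic-translation curves in the plane) with disjoint
images have proportional translation vectors. -/
private lemma det_zero (γ δ : ℝ → ℝ × ℝ) (a b : ℝ × ℝ)
    (hγ : Continuous γ) (hδ : Continuous δ)
    (hγp : ∀ s, γ (s+1) = γ s + a) (hδp : ∀ t, δ (t+1) = δ t + b)
    (hdisj : ∀ s t, γ s ≠ δ t) :
    a.1 * b.2 = a.2 * b.1 := by
  by_contra hd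
  have hd0 : a.1 * b.2 - a.2 * b.1 ≠ 0 := sub_ne_zero.mpr hd
  obtain ⟨γ', hγ'def⟩ : ∃ γ'' : ℝ → ℝ × ℝ, γ'' = fun s =>
      (((b.2 * (γ s).1 - b.1 * (γ s).2) / (a.1 * b.2 - a.2 * b.1),
        (-(a.2) * (γ s).1 + a.1 * (γ s).2) / (a.1 * b.2 - a.2 * b.1)) : ℝ × ℝ) := ⟨_, rfl⟩
  obtain ⟨δ', hδ'def⟩ : ∃ δ'' : ℝ → ℝ × ℝ, δ'' = fun t =>
      (((b.2 * (δ t).1 - b.1 * (δ t).2) / (a.1 * b.2 - a.2 * b.1),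
        (-(a.2) * (δ t).1 + a.1 * (δ t).2) / (a.1 * b.2 - a.2 * b.1)) : ℝ × ℝ) := ⟨_, rfl⟩
  have hγ'1 : ∀ s, (γ' s).1 = (b.2 * (γ s).1 - b.1 * (γ s).2) / (a.1 * b.2 - a.2 * b.1) := by
    intro s; rw [hγ'def]
  have hγ'2 : ∀ s, (γ' s).2 = (-(a.2) * (γ s).1 + a.1 * (γ s).2) / (a.1 * b.2 - a.2 * b.1) := by
    intro s; rw [hγ'def]
  have hδ'1 : ∀ t, (δ' t).1 = (b.2 * (δ t).1 - b.1 * (δ t).2) / (a.1 * b.2 - a.2 * b.1) := by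
    intro t; rw [hδ'def]
  have hδ'2 : ∀ t, (δ' t).2 = (-(a.2) * (δ t).1 + a.1 * (δ t).2) / (a.1 * b.2 - a.2 * b.1) := by
    intro t; rw [hδ'def]
  have hγ'c : Continuous γ' := by
    rw [hγ'def]
    exact (((continuous_const.mul (continuous_fst.comp hγ)).sub
      (continuous_const.mul (continuous_snd.comp hγ))).div_const _).prodMk
      (((continuous_const.mul (continuous_fst.comp hγ)).add
      (continuous_const.mul (continuous_snd.comp hγ))).div_const _)
  have hδ'c : Continuous δ' := by
    rw [hδ'def]
    exact (((continuous_const.mul (continuous_fst.comp hδ)).sub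
      (continuous_const.mul (continuous_snd.comp hδ))).div_const _).prodMk
      (((continuous_const.mul (continuous_fst.comp hδ)).add
      (continuous_const.mul (continuous_snd.comp hδ))).div_const _)
  -- component translation identities
  have hγp1 : ∀ s, (γ (s+1)).1 = (γ s).1 + a.1 := by
    intro s; rw [hγp s]; rfl
  have hγp2 : ∀ s, (γ (s+1)).2 = (γ s).2 + a.2 := by
    intro s; rw [hγp s]; rfl
  have hδp1 : ∀ t, (δ (t+1)).1 = (δ t).1 + b.1 := by
    intro t; rw [hδp t]; rfl
  have hδp2 : ∀ t, (δ (t+1)).2 = (δ t).2 + b.2 := by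
    intro t; rw [hδp t]; rfl
  -- periodicity of the normalized components
  have hper1 : ∀ s, (γ' (s+1)).1 - (s+1) = (γ' s).1 - s := by
    intro s
    rw [hγ'1, hγ'1, hγp1, hγp2]
    rw [sub_eq_sub_iff_sub_eq_sub, ← sub_div, div_eq_iff hd0]
    ring
  have hper2 : ∀ s, (γ' (s+1)).2 = (γ' s).2 := by
    intro s
    rw [hγ'2, hγ'2, hγp1, hγp2]
    field_simp
    ring
  have hper3 : ∀ t, (δ' (t+1)).1 = (δ' t).1 := by
    intro t
    rw [hδ'1, hδ'1, hδp1, hδp2]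
    field_simp
    ring
  have hper4 : ∀ t, (δ' (t+1)).2 - (t+1) = (δ' t).2 - t := by
    intro t
    rw [hδ'2, hδ'2, hδp1, hδp2]
    field_simp
    ring
  -- bounds
  obtain ⟨C1, hC1n, hC1x⟩ := periodic_bounded (ψ := fun s => (γ' s).1 - s)
    (by fun_prop) hper1
  obtain ⟨C2, hC2n, hC2x⟩ := periodic_bounded (ψ := fun s => (γ' s).2)
    (by fun_prop) hper2
  obtain ⟨C3, hC3n, hC3x⟩ := periodic_bounded (ψ := fun t => (δ' t).1)
    (by fun_prop) hper3
  obtain ⟨C4, hC4n, hC4x⟩ := periodic_bounded (ψ := fun t => (δ' t).2 - t)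
    (by fun_prop) hper4
  have hC1 : ∀ s, |(γ' s).1 - s| ≤ C1 := hC1x
  have hC2 : ∀ s, |(γ' s).2| ≤ C2 := hC2x
  have hC3 : ∀ t, |(δ' t).1| ≤ C3 := hC3x
  have hC4 : ∀ t, |(δ' t).2 - t| ≤ C4 := hC4x
  obtain ⟨C, hCdef⟩ : ∃ C : ℝ, C = C1 + C2 + C3 + C4 + 1 := ⟨_, rfl⟩
  -- apply the crossing lemma
  obtain ⟨s, hs, t, ht, hx⟩ := crossing (fun x => γ' (6*C*x - 3*C))
    (fun x => δ' (6*C*x - 3*C)) (hγ'c.comp (by continuity)) (hδ'c.comp (by continuity))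
    (by
      intro t ht
      show (γ' (6*C*0 - 3*C)).1 ≤ (δ' (6*C*t - 3*C)).1
      have A := abs_le.mp (hC1 (6*C*0 - 3*C))
      have B := abs_le.mp (hC3 (6*C*t - 3*C))
      linarith)
    (by
      intro t ht
      show (δ' (6*C*t - 3*C)).1 ≤ (γ' (6*C*1 - 3*C)).1
      have A := abs_le.mp (hC1 (6*C*1 - 3*C))
      have B := abs_le.mp (hC3 (6*C*t - 3*C))
      linarith)
    (by
      intro s hs
      show (δ' (6*C*0 - 3*C)).2 ≤ (γ' (6*C*s - 3*C)).2
      have A := abs_le.mp (hC2 (6*C*s - 3*C))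
      have B := abs_le.mp (hC4 (6*C*0 - 3*C))
      linarith)
    (by
      intro s hs
      show (γ' (6*C*s - 3*C)).2 ≤ (δ' (6*C*1 - 3*C)).2
      have A := abs_le.mp (hC2 (6*C*s - 3*C))
      have B := abs_le.mp (hC4 (6*C*1 - 3*C))
      linarith)
  replace hx : γ' (6*C*s - 3*C) = δ' (6*C*t - 3*C) := hx
  have e1 := congrArg Prod.fst hx
  have e2 := congrArg Prod.snd hx
  rw [hγ'1, hδ'1] at e1
  rw [hγ'2, hδ'2] at e2
  have e1' := mul_right_cancel₀ hd0 ((div_eq_div_iff hd0 hd0).mp e1)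
  have e2' := mul_right_cancel₀ hd0 ((div_eq_div_iff hd0 hd0).mp e2)
  apply hdisj (6*C*s - 3*C) (6*C*t - 3*C)
  have hX' : ((γ (6*C*s - 3*C)).1 - (δ (6*C*t - 3*C)).1) * (a.1*b.2 - a.2*b.1) = 0 := by
    linear_combination a.1 * e1' + b.1 * e2'
  have hY' : ((γ (6*C*s - 3*C)).2 - (δ (6*C*t - 3*C)).2) * (a.1*b.2 - a.2*b.1) = 0 := by
    linear_combination a.2 * e1' + b.2 * e2'
  have hX : (γ (6*C*s - 3*C)).1 = (δ (6*C*t - 3*C)).1 := by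
    rcases mul_eq_zero.mp hX' with h | h
    · linarith
    · exact absurd h hd0
  have hY : (γ (6*C*s - 3*C)).2 = (δ (6*C*t - 3*C)).2 := by
    rcases mul_eq_zero.mp hY' with h | h
    · linarith
    · exact absurd h hd0
  exact Prod.ext hX hY

/-- Push a loop in the zero level set off to the positive and negative sides using the
gradient of `F`. -/
private lemma pushoff (F : ℝ × ℝ → ℝ) (hF : ContDiff ℝ (⊤ : ℕ∞) F)
    (hper : ∀ (x : ℝ × ℝ) (m : ℤ × ℤ), F (x + ((m.1 : ℝ), (m.2 : ℝ))) = F x)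
    (hreg : ∀ x, F x = 0 → fderiv ℝ F x ≠ 0)
    (γ : ℝ → ℝ × ℝ) (v : ℤ × ℤ) (hγc : Continuous γ)
    (hγp : ∀ t, γ (t + 1) = γ t + ((v.1 : ℝ), (v.2 : ℝ)))
    (hz : ∀ t, F (γ t) = 0) :
    (∃ γ' : ℝ → ℝ × ℝ, Continuous γ' ∧ (∀ t, γ' (t+1) = γ' t + ((v.1:ℝ),(v.2:ℝ))) ∧
      ∀ t, 0 < F (γ' t)) ∧
    (∃ γ' : ℝ → ℝ × ℝ, Continuous γ' ∧ (∀ t, γ' (t+1) = γ' t + ((v.1:ℝ),(v.2:ℝ))) ∧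
      ∀ t, F (γ' t) < 0) := by
  have hdiff : Differentiable ℝ F := hF.differentiable (by simp)
  obtain ⟨g, hgdef⟩ : ∃ g : ℝ × ℝ → ℝ × ℝ, g = fun x =>
      (fderiv ℝ F x ((1:ℝ),(0:ℝ)), fderiv ℝ F x ((0:ℝ),(1:ℝ))) := ⟨_, rfl⟩
  have hDc : Continuous fun x => fderiv ℝ F x := hF.continuous_fderiv (by simp)
  have hgc : Continuous g := by
    rw [hgdef]
    exact (hDc.clm_apply continuous_const).prodMk (hDc.clm_apply continuous_const)
  have happ : ∀ (x : ℝ × ℝ) (w : ℝ × ℝ),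
      fderiv ℝ F x w = w.1 * (g x).1 + w.2 * (g x).2 := by
    intro x w
    have hw : w = w.1 • ((1:ℝ),(0:ℝ)) + w.2 • ((0:ℝ),(1:ℝ)) := by
      ext <;> simp
    conv_lhs => rw [hw]
    rw [map_add, map_smul, map_smul, hgdef]
    simp [smul_eq_mul]
  -- periodicity of the derivative and of g
  have hDper : ∀ (x : ℝ × ℝ) (m : ℤ × ℤ),
      fderiv ℝ F (x + ((m.1:ℝ),(m.2:ℝ))) = fderiv ℝ F x := by
    intro x m
    have h1 : (fun y : ℝ × ℝ => F (y + ((m.1:ℝ),(m.2:ℝ)))) = F :=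
      funext fun y => hper y m
    have h2 : HasFDerivAt (fun y : ℝ × ℝ => F (y + ((m.1:ℝ),(m.2:ℝ))))
        ((fderiv ℝ F (x + ((m.1:ℝ),(m.2:ℝ)))).comp (ContinuousLinearMap.id ℝ (ℝ × ℝ))) x :=
      ((hdiff _).hasFDerivAt).comp x ((hasFDerivAt_id x).add_const _)
    rw [h1] at h2
    have h3 := h2.fderiv
    rw [ContinuousLinearMap.comp_id] at h3
    exact h3.symm
  have hgper : ∀ (x : ℝ × ℝ) (m : ℤ × ℤ), g (x + ((m.1:ℝ),(m.2:ℝ))) = g x := by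
    intro x m
    simp only [hgdef]
    rw [hDper x m]
  -- integer translations of γ
  have hγint := translate_int hγp
  -- lower bound c2 for the squared gradient along γ on [0,1]
  have h01 : (0:ℝ) ∈ Icc (0:ℝ) 1 := ⟨le_rfl, zero_le_one⟩
  have hQc : Continuous fun t => (g (γ t)).1^2 + (g (γ t)).2^2 := by
    have := (hgc.comp hγc)
    fun_prop
  obtain ⟨t₀, ht₀I, ht₀min⟩ := isCompact_Icc.exists_isMinOn ⟨0, h01⟩ hQc.continuousOn
  obtain ⟨c2, hc2def⟩ : ∃ c2 : ℝ, c2 = (g (γ t₀)).1^2 + (g (γ t₀)).2^2 := ⟨_, rfl⟩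
  have hgne : ∀ t, g (γ t) ≠ 0 := by
    intro t hgt
    apply hreg (γ t) (hz t)
    apply ContinuousLinearMap.ext
    intro w
    rw [happ, hgt]
    simp
  have hc2pos : 0 < c2 := by
    rw [hc2def]
    have h1 : (g (γ t₀)).1 ≠ 0 ∨ (g (γ t₀)).2 ≠ 0 := by
      by_contra hcon
      push_neg at hcon
      exact hgne t₀ (Prod.ext hcon.1 hcon.2)
    rcases h1 with h1 | h1
    · nlinarith [sq_nonneg (g (γ t₀)).2, sq_pos_of_ne_zero h1]
    · nlinarith [sq_nonneg (g (γ t₀)).1, sq_pos_of_ne_zero h1]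
  have hc2min : ∀ t ∈ Icc (0:ℝ) 1, c2 ≤ (g (γ t)).1^2 + (g (γ t)).2^2 := by
    intro t ht
    rw [hc2def]
    exact isMinOn_iff.mp ht₀min t ht
  -- upper bound M for the gradient norm along γ on [0,1]
  obtain ⟨M₀, hM₀⟩ := isCompact_Icc.exists_bound_of_continuousOn
    (hgc.comp hγc).continuousOn
  obtain ⟨M, hMdef⟩ : ∃ M : ℝ, M = max M₀ 1 := ⟨_, rfl⟩
  have hM1 : 1 ≤ M := hMdef ▸ le_max_right _ _
  have hMpos : 0 < M := lt_of_lt_of_le zero_lt_one hM1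
  have hMb : ∀ t ∈ Icc (0:ℝ) 1, ‖g (γ t)‖ ≤ M := by
    intro t ht
    have := hM₀ t ht
    simp only [Function.comp_apply] at this
    exact this.trans (hMdef ▸ le_max_left _ _)
  -- uniform continuity of the derivative on a compact thickening
  obtain ⟨K', hK'⟩ : ∃ K' : Set (ℝ × ℝ), K' = Metric.cthickening 1 (γ '' Icc 0 1) :=
    ⟨_, rfl⟩
  have hK'c : IsCompact K' := hK' ▸ (isCompact_Icc.image hγc).cthickening
  have hucD := hK'c.uniformContinuousOn_of_continuous hDc.continuousOn
  rw [Metric.uniformContinuousOn_iff_le] at hucD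
  obtain ⟨δ₀, hδ₀pos, hδ₀⟩ := hucD (c2/(2*M)) (by positivity)
  obtain ⟨ε, hεdef⟩ : ∃ ε : ℝ, ε = min (δ₀/M) (1/M) := ⟨_, rfl⟩
  have hεpos : 0 < ε := by
    rw [hεdef]
    exact lt_min (by positivity) (by positivity)
  have hεM1 : ε * M ≤ 1 := by
    rw [hεdef]
    calc min (δ₀/M) (1/M) * M ≤ (1/M) * M := by
          apply mul_le_mul_of_nonneg_right (min_le_right _ _) hMpos.le
      _ = 1 := by field_simp
  have hεMδ : ε * M ≤ δ₀ := by
    rw [hεdef]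
    calc min (δ₀/M) (1/M) * M ≤ (δ₀/M) * M := by
          apply mul_le_mul_of_nonneg_right (min_le_left _ _) hMpos.le
      _ = δ₀ := by field_simp

  -- membership and distance facts
  have hmem : ∀ t ∈ Icc (0:ℝ) 1, ∀ (u : ℝ × ℝ), ‖u‖ ≤ M → ∀ r : ℝ, 0 ≤ r → r ≤ ε →
      (γ t + r • u ∈ K' ∧ γ t ∈ K' ∧ dist (γ t + r • u) (γ t) ≤ δ₀) := by
    intro t ht u hu r hr0 hrε
    have hγtK : γ t ∈ γ '' Icc 0 1 := ⟨t, ht, rfl⟩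
    have hd1 : dist (γ t + r • u) (γ t) ≤ ε * M := by
      rw [dist_eq_norm]
      simp only [add_sub_cancel_left]
      rw [norm_smul, Real.norm_eq_abs, abs_of_nonneg hr0]
      exact mul_le_mul hrε hu (norm_nonneg _) hεpos.le
    refine ⟨?_, ?_, hd1.trans hεMδ⟩
    · rw [hK']
      exact Metric.mem_cthickening_of_dist_le _ _ _ _ hγtK (hd1.trans hεM1)
    · rw [hK']
      exact Metric.self_subset_cthickening _ hγtK
  -- lower bound on the directional derivative at perturbed points
  have hderiv_lb : ∀ t ∈ Icc (0:ℝ) 1, ∀ (u : ℝ × ℝ), ‖u‖ ≤ M → ∀ r : ℝ, 0 ≤ r → r ≤ ε →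
      c2/2 ≤ fderiv ℝ F (γ t + r • u) (g (γ t)) := by
    intro t ht u hu r hr0 hrε
    obtain ⟨hx1, hx2, hx3⟩ := hmem t ht u hu r hr0 hrε
    have hop := hδ₀ _ hx1 _ hx2 hx3
    rw [dist_eq_norm] at hop
    have hle := (fderiv ℝ F (γ t + r • u) - fderiv ℝ F (γ t)).le_opNorm (g (γ t))
    rw [ContinuousLinearMap.sub_apply] at hle
    have hwb : ‖g (γ t)‖ ≤ M := hMb t ht
    have h0 : fderiv ℝ F (γ t) (g (γ t)) = (g (γ t)).1^2 + (g (γ t)).2^2 := by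
      rw [happ]
      ring
    have hQ := hc2min t ht
    have habs : |fderiv ℝ F (γ t + r • u) (g (γ t)) - fderiv ℝ F (γ t) (g (γ t))|
        ≤ c2/2 := by
      rw [← Real.norm_eq_abs]
      calc ‖fderiv ℝ F (γ t + r • u) (g (γ t)) - fderiv ℝ F (γ t) (g (γ t))‖
          ≤ ‖fderiv ℝ F (γ t + r • u) - fderiv ℝ F (γ t)‖ * ‖g (γ t)‖ := hle
        _ ≤ (c2/(2*M)) * M := by
            apply mul_le_mul hop hwb (norm_nonneg _) (by positivity)
        _ = c2/2 := by field_simp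
    have := abs_le.mp habs
    linarith [this.1, this.2]
  -- derivative of r ↦ F (γ t + r • u)
  have hasD : ∀ (t : ℝ) (u : ℝ × ℝ) (r : ℝ),
      HasDerivAt (fun r : ℝ => F (γ t + r • u)) (fderiv ℝ F (γ t + r • u) u) r := by
    intro t u r
    have hin : HasDerivAt (fun y : ℝ => γ t + y • u) u r := by
      have h1 : HasDerivAt (fun y : ℝ => y • u) ((1:ℝ) • u) r :=
        (hasDerivAt_id r).smul_const u
      rw [one_smul] at h1
      exact h1.const_add (γ t)
    exact ((hdiff _).hasFDerivAt).comp_hasDerivAt r hin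
  have hlinD : ∀ (c r : ℝ), HasDerivAt (fun y : ℝ => c * y) c r := by
    intro c r
    simpa using (hasDerivAt_id r).const_mul c
  -- positive push
  have claimP : ∀ t ∈ Icc (0:ℝ) 1, c2/2 * ε ≤ F (γ t + ε • g (γ t)) := by
    intro t ht
    have hmono : MonotoneOn (fun r : ℝ => F (γ t + r • g (γ t)) - c2/2 * r) (Icc 0 ε) := by
      apply monotoneOn_of_deriv_nonneg (convex_Icc 0 ε)
      · apply Continuous.continuousOn
        apply Continuous.sub
        · exact hF.continuous.comp (by fun_prop)
        · fun_prop
      · intro r _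
        exact ((hasD t (g (γ t)) r).sub (hlinD (c2/2) r)).differentiableAt.differentiableWithinAt
      · intro r hr
        rw [interior_Icc] at hr
        rw [HasDerivAt.deriv (f := fun r : ℝ => F (γ t + r • g (γ t)) - c2/2 * r)
          ((hasD t (g (γ t)) r).sub (hlinD (c2/2) r))]
        have := hderiv_lb t ht (g (γ t)) (hMb t ht) r hr.1.le hr.2.le
        linarith
    have h0m : (0:ℝ) ∈ Icc (0:ℝ) ε := ⟨le_rfl, hεpos.le⟩
    have hεm : ε ∈ Icc (0:ℝ) ε := ⟨hεpos.le, le_rfl⟩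
    have := hmono h0m hεm hεpos.le
    simp only [zero_smul, add_zero, mul_zero, sub_zero] at this
    rw [hz t] at this
    linarith
  -- negative push
  have claimN : ∀ t ∈ Icc (0:ℝ) 1, F (γ t + ε • -(g (γ t))) ≤ -(c2/2 * ε) := by
    intro t ht
    have hnn : ‖-(g (γ t))‖ ≤ M := by rw [norm_neg]; exact hMb t ht
    have hanti : AntitoneOn (fun r : ℝ => F (γ t + r • -(g (γ t))) + c2/2 * r) (Icc 0 ε) := by
      apply antitoneOn_of_deriv_nonpos (convex_Icc 0 ε)
      · apply Continuous.continuousOn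
        apply Continuous.add
        · exact hF.continuous.comp (by fun_prop)
        · fun_prop
      · intro r _
        exact ((hasD t (-(g (γ t))) r).add (hlinD (c2/2) r)).differentiableAt.differentiableWithinAt
      · intro r hr
        rw [interior_Icc] at hr
        rw [HasDerivAt.deriv (f := fun r : ℝ => F (γ t + r • -(g (γ t))) + c2/2 * r)
          ((hasD t (-(g (γ t))) r).add (hlinD (c2/2) r))]
        have h1 := hderiv_lb t ht (-(g (γ t))) hnn r hr.1.le hr.2.le
        have h2 : fderiv ℝ F (γ t + r • -(g (γ t))) (-(g (γ t)))
            = -(fderiv ℝ F (γ t + r • -(g (γ t))) (g (γ t))) := map_neg _ _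
        rw [h2]
        linarith
    have h0m : (0:ℝ) ∈ Icc (0:ℝ) ε := ⟨le_rfl, hεpos.le⟩
    have hεm : ε ∈ Icc (0:ℝ) ε := ⟨hεpos.le, le_rfl⟩
    have := hanti h0m hεm hεpos.le
    simp only [zero_smul, add_zero, mul_zero] at this
    rw [hz t] at this
    linarith
  -- cast helper
  have haux : ∀ n : ℤ, (n:ℝ) • (((v.1:ℝ)), ((v.2:ℝ))) = (((n • v).1 : ℝ), ((n • v).2 : ℝ)) := by
    intro n
    have h1 : (n • v).1 = n * v.1 := rfl
    have h2 : (n • v).2 = n * v.2 := rfl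
    rw [h1, h2]
    ext
    · push_cast
      simp [smul_eq_mul]
    · push_cast
      simp [smul_eq_mul]
  -- assembling a pushed loop from a sign
  have build : ∀ (u : ℝ × ℝ → ℝ × ℝ), Continuous u →
      (∀ (x : ℝ × ℝ) (m : ℤ × ℤ), u (x + ((m.1:ℝ),(m.2:ℝ))) = u x) →
      (Continuous (fun t => γ t + ε • u (γ t)) ∧
       (∀ t, (γ (t+1) + ε • u (γ (t+1))) = (γ t + ε • u (γ t)) + ((v.1:ℝ),(v.2:ℝ))) ∧
       (∀ t : ℝ, F (γ t + ε • u (γ t)) = F (γ (Int.fract t) + ε • u (γ (Int.fract t))))) := by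
    intro u huc huper
    refine ⟨by fun_prop, ?_, ?_⟩
    · intro t
      rw [hγp t, huper (γ t) v]
      abel
    · intro t
      have hsplit : γ t = γ (Int.fract t) + (((⌊t⌋ • v).1 : ℝ), ((⌊t⌋ • v).2 : ℝ)) := by
        conv_lhs => rw [← Int.fract_add_floor t]
        rw [hγint ⌊t⌋ (Int.fract t), haux ⌊t⌋]
      rw [hsplit, huper _ (⌊t⌋ • v)]
      have : γ (Int.fract t) + (((⌊t⌋ • v).1 : ℝ), ((⌊t⌋ • v).2 : ℝ))
          + ε • u (γ (Int.fract t))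
          = (γ (Int.fract t) + ε • u (γ (Int.fract t)))
            + (((⌊t⌋ • v).1 : ℝ), ((⌊t⌋ • v).2 : ℝ)) := by abel
      rw [this, hper _ (⌊t⌋ • v)]
  have hfrI : ∀ t : ℝ, Int.fract t ∈ Icc (0:ℝ) 1 :=
    fun t => ⟨Int.fract_nonneg t, (Int.fract_lt_one t).le⟩
  constructor
  · obtain ⟨hc1, hc2', hc3⟩ := build g hgc hgper
    refine ⟨fun t => γ t + ε • g (γ t), hc1, hc2', fun t => ?_⟩
    rw [hc3 t]
    have := claimP (Int.fract t) (hfrI t)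
    nlinarith
  · obtain ⟨hc1, hc2', hc3⟩ := build (fun x => -(g x)) hgc.neg
      (fun x m => by simp only [hgper x m])
    refine ⟨fun t => γ t + ε • -(g (γ t)), hc1, hc2', fun t => ?_⟩
    rw [hc3 t]
    have := claimN (Int.fract t) (hfrI t)
    nlinarith

/-- Any integer vector orthogonal (in the determinant sense) to a nonzero `v` is an
integer multiple of the primitive vector of `v`. -/
private lemma colin (v z : ℤ × ℤ) (hv : v ≠ 0) (hdet : v.1 * z.2 = v.2 * z.1) :
    z ∈ AddSubgroup.closure
      {((v.1 / (Int.gcd v.1 v.2 : ℤ), v.2 / (Int.gcd v.1 v.2 : ℤ)) : ℤ × ℤ)} := by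
  set d : ℤ := (Int.gcd v.1 v.2 : ℤ) with hddef
  have hgpos : 0 < Int.gcd v.1 v.2 := by
    rcases Nat.eq_zero_or_pos (Int.gcd v.1 v.2) with h | h
    · exfalso
      obtain ⟨h1, h2⟩ := Int.gcd_eq_zero_iff.mp h
      exact hv (Prod.ext h1 h2)
    · exact h
  have hd0 : d ≠ 0 := by
    rw [hddef]
    exact_mod_cast hgpos.ne'
  have hv1 : v.1 / d * d = v.1 := Int.ediv_mul_cancel (Int.gcd_dvd_left _ _)
  have hv2 : v.2 / d * d = v.2 := Int.ediv_mul_cancel (Int.gcd_dvd_right _ _)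
  set w1 : ℤ := v.1 / d
  set w2 : ℤ := v.2 / d
  have hcop : Int.gcd w1 w2 = 1 := Int.gcd_div_gcd_div_gcd hgpos
  have hbez : (1:ℤ) = w1 * Int.gcdA w1 w2 + w2 * Int.gcdB w1 w2 := by
    have := Int.gcd_eq_gcd_ab w1 w2
    rw [hcop] at this
    exact_mod_cast this
  -- the small determinant identity
  have hdet' : w1 * z.2 = w2 * z.1 := by
    have h : d * (w1 * z.2) = d * (w2 * z.1) := by
      have e1 : d * w1 = v.1 := by rw [mul_comm]; exact hv1
      have e2 : d * w2 = v.2 := by rw [mul_comm]; exact hv2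
      calc d * (w1 * z.2) = (d * w1) * z.2 := by ring
        _ = v.1 * z.2 := by rw [e1]
        _ = v.2 * z.1 := hdet
        _ = (d * w2) * z.1 := by rw [e2]
        _ = d * (w2 * z.1) := by ring
    exact mul_left_cancel₀ hd0 h
  set k : ℤ := Int.gcdA w1 w2 * z.1 + Int.gcdB w1 w2 * z.2 with hkdef
  apply AddSubgroup.mem_closure_singleton.mpr
  refine ⟨k, ?_⟩
  have hz1 : k * w1 = z.1 := by
    have h0 : w1 * z.2 - w2 * z.1 = 0 := sub_eq_zero_of_eq hdet'
    have hh : k * w1 = z.1 * (w1 * Int.gcdA w1 w2 + w2 * Int.gcdB w1 w2)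
        + Int.gcdB w1 w2 * (w1 * z.2 - w2 * z.1) := by
      rw [hkdef]; ring
    rw [← hbez, h0] at hh
    simpa using hh
  have hz2 : k * w2 = z.2 := by
    have h0 : w2 * z.1 - w1 * z.2 = 0 := sub_eq_zero_of_eq hdet'.symm
    have hh : k * w2 = z.2 * (w1 * Int.gcdA w1 w2 + w2 * Int.gcdB w1 w2)
        + Int.gcdA w1 w2 * (w2 * z.1 - w1 * z.2) := by
      rw [hkdef]; ring
    rw [← hbez, h0] at hh
    simpa using hh
  simp [Prod.ext_iff, smul_eq_mul, hz1, hz2]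

/-- The subgroup of `H₁(T²) ≅ ℤ²` realized by loops lying in the set where the values of `F`
satisfy the predicate `P`: a loop of homology class `v` is a continuous `γ : ℝ → ℝ²` with
`γ(t+1) = γ(t) + v`. -/
def loopClasses (F : ℝ × ℝ → ℝ) (P : ℝ → Prop) : AddSubgroup (ℤ × ℤ) :=
  AddSubgroup.closure {v : ℤ × ℤ | ∃ γ : ℝ → ℝ × ℝ, Continuous γ ∧
    (∀ t, γ (t + 1) = γ t + ((v.1 : ℝ), (v.2 : ℝ))) ∧ ∀ t, P (F (γ t))}

/-- Let `F : ℝ² → ℝ` be smooth and `ℤ²`-periodic (a smooth function on `T²`) with `0` a regular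
value, and suppose `F⁻¹(0)` contains a non-contractible loop. Then both `{F > 0}` and `{F < 0}`
contain non-contractible loops, and the corresponding images in `H₁(T²) ≅ ℤ²` are nonzero
subgroups contained in a common rank-one subgroup. -/
theorem stmt_18 (F : ℝ × ℝ → ℝ) (hF : ContDiff ℝ (⊤ : ℕ∞) F)
    (hper : ∀ (x : ℝ × ℝ) (m : ℤ × ℤ), F (x + ((m.1 : ℝ), (m.2 : ℝ))) = F x)
    (hreg : ∀ x, F x = 0 → fderiv ℝ F x ≠ 0)
    (hloop : ∃ (γ : ℝ → ℝ × ℝ) (v : ℤ × ℤ), Continuous γ ∧ v ≠ 0 ∧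
      (∀ t, γ (t + 1) = γ t + ((v.1 : ℝ), (v.2 : ℝ))) ∧ ∀ t, F (γ t) = 0) :
    loopClasses F (fun a => 0 < a) ≠ ⊥ ∧ loopClasses F (fun a => a < 0) ≠ ⊥ ∧
    ∃ v : ℤ × ℤ, v ≠ 0 ∧
      loopClasses F (fun a => 0 < a) ≤ AddSubgroup.closure {v} ∧
      loopClasses F (fun a => a < 0) ≤ AddSubgroup.closure {v} := by
  obtain ⟨γ, v, hγc, hv0, hγp, hγz⟩ := hloop
  obtain ⟨⟨γp, hpc, hpp, hppos⟩, ⟨γm, hmc, hmp, hmneg⟩⟩ :=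
    pushoff F hF hper hreg γ v hγc hγp hγz
  have hvP : v ∈ loopClasses F (fun a => 0 < a) :=
    AddSubgroup.subset_closure ⟨γp, hpc, hpp, hppos⟩
  have hvM : v ∈ loopClasses F (fun a => a < 0) :=
    AddSubgroup.subset_closure ⟨γm, hmc, hmp, hmneg⟩
  refine ⟨?_, ?_, ?_⟩
  · intro h
    rw [h] at hvP
    exact hv0 (AddSubgroup.mem_bot.mp hvP)
  · intro h
    rw [h] at hvM
    exact hv0 (AddSubgroup.mem_bot.mp hvM)
  · -- the common rank-one subgroup
    set d : ℤ := (Int.gcd v.1 v.2 : ℤ) with hddef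
    refine ⟨(v.1 / d, v.2 / d), ?_, ?_, ?_⟩
    · -- primitive vector is nonzero
      intro h
      have h1 : v.1 / d = 0 := by
        have := congrArg Prod.fst h
        simpa using this
      have h2 : v.2 / d = 0 := by
        have := congrArg Prod.snd h
        simpa using this
      have hv1 : v.1 / d * d = v.1 := Int.ediv_mul_cancel (Int.gcd_dvd_left _ _)
      have hv2 : v.2 / d * d = v.2 := Int.ediv_mul_cancel (Int.gcd_dvd_right _ _)
      rw [h1, zero_mul] at hv1
      rw [h2, zero_mul] at hv2
      apply hv0
      rw [Prod.ext_iff]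
      exact ⟨hv1.symm, hv2.symm⟩
    · -- positive loops
      apply (AddSubgroup.closure_le _).mpr
      rintro z ⟨δ, hδc, hδp, hδpos⟩
      have hdisj : ∀ s t, γ s ≠ δ t := by
        intro s t h
        have h1 := hγz s
        rw [h] at h1
        have h2 := hδpos t
        simp only [] at h2
        linarith
      have hdet := det_zero γ δ ((v.1:ℝ),(v.2:ℝ)) ((z.1:ℝ),(z.2:ℝ))
        hγc hδc hγp hδp hdisj
      have hdetz : v.1 * z.2 = v.2 * z.1 := by
        simp only [] at hdet
        exact_mod_cast hdet
      exact colin v z hv0 hdetz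
    · -- negative loops
      apply (AddSubgroup.closure_le _).mpr
      rintro z ⟨δ, hδc, hδp, hδneg⟩
      have hdisj : ∀ s t, γ s ≠ δ t := by
        intro s t h
        have h1 := hγz s
        rw [h] at h1
        have h2 := hδneg t
        simp only [] at h2
        linarith
      have hdet := det_zero γ δ ((v.1:ℝ),(v.2:ℝ)) ((z.1:ℝ),(z.2:ℝ))
        hγc hδc hγp hδp hdisj
      have hdetz : v.1 * z.2 = v.2 * z.1 := by
        simp only [] at hdet
        exact_mod_cast hdet
      exact colin v z hv0 hdetz
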